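/- arXiv:1609.00358 — 2 statements merged into one kernel-verified Lean document; each statement's English description precedes it below -/
import Mathlib

section
/- Let X and Y be complete conformal vector fields of a pseudo-Riemannian manifold (M,g) with [X,Y] = Y and g(X,X) > 0 everywhere. Set g₀ = g / g(X,X). If the functions g₀(Y,Y) and g₀(X,Y) are bounded along every orbit of the flow φ_X^t of X, then Y is everywhere g₀-isotropic and g₀-orthogonal to X, and both X and Y are Killing vector fields of g₀. -/
open VectorField

open Set Metric Filter
open scoped Topology

section FlowAux


variable {E : Type*} [NormedAddCommGroup E] [NormedSpace ℝ E]

private lemma exp_sub_one_le_mul_exp {x : ℝ} (hx : 0 ≤ x) : Real.exp x - 1 ≤ x * Real.exp x := by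
  have h := Real.add_one_le_exp (-x)
  have h2 : Real.exp (-x) * Real.exp x = 1 := by rw [← Real.exp_add]; simp
  nlinarith [Real.exp_pos x]

private lemma flowCont {φ : ℝ → E → E} {Z : E → E}
    (hgen : ∀ t x, HasDerivAt (fun s => φ s x) (Z (φ t x)) t) (x : E) :
    Continuous fun t => φ t x :=
  continuous_iff_continuousAt.2 fun t => (hgen t x).continuousAt

private lemma fderiv_flow_zero {φ : ℝ → E → E} (h0 : ∀ x, φ 0 x = x) (p v : E) :
    fderiv ℝ (φ 0) p v = v := by
  have h : φ 0 = id := funext h0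
  rw [h, fderiv_id]; rfl

set_option maxHeartbeats 2000000 in
/-- One-sided key lemma: the spatial derivative of the flow is right-differentiable in time
at `t = 0`, with derivative `fderiv Z p v`. -/
private lemma key_right {Z : E → E} {φ : ℝ → E → E} (hZ : ContDiff ℝ (⊤ : ℕ∞) Z)
    (h0 : ∀ x, φ 0 x = x)
    (hsm : ∀ t, ContDiff ℝ (⊤ : ℕ∞) (φ t))
    (hgen : ∀ t x, HasDerivAt (fun s => φ s x) (Z (φ t x)) t) (p v : E) :
    HasDerivWithinAt (fun s => fderiv ℝ (φ s) p v) (fderiv ℝ Z p v) (Ici 0) 0 := by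
  have hF0 : fderiv ℝ (φ 0) p v = v := fderiv_flow_zero h0 p v
  set D : E →L[ℝ] E := fderiv ℝ Z p with hDdef
  obtain ⟨L, hL0, hDop⟩ : ∃ L : ℝ, 0 ≤ L ∧ ∀ w, ‖D w‖ ≤ L * ‖w‖ :=
    ⟨‖D‖, norm_nonneg _, fun w => D.le_opNorm w⟩
  set K : ℝ := L + 1 with hKdef
  have hK1 : 1 ≤ K := by rw [hKdef]; linarith
  have hKpos : 0 < K := by linarith
  have hLK : L + 1 ≤ K := hKdef.ge
  clear_value K
  obtain ⟨V, hvV, hVpos⟩ : ∃ V : ℝ, ‖v‖ ≤ V ∧ 0 < V :=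
    ⟨‖v‖ + 1, by linarith, by linarith [norm_nonneg v]⟩
  rw [hasDerivWithinAt_iff_isLittleO, Asymptotics.isLittleO_iff]
  intro c hc
  -- Step 1: choose all the constants
  obtain ⟨ε₁, hε₁pos, hε₁le1, hε₁le2⟩ :
      ∃ ε₁ : ℝ, 0 < ε₁ ∧ ε₁ ≤ 1 ∧ ε₁ * (2 * Real.exp K * V * (1 + L) + 1) ≤ c := by
    refine ⟨min 1 (c / (2 * Real.exp K * V * (1 + L) + 1)), lt_min one_pos (by positivity),
      min_le_left _ _, ?_⟩
    have h1 : min 1 (c / (2 * Real.exp K * V * (1 + L) + 1))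
        ≤ c / (2 * Real.exp K * V * (1 + L) + 1) := min_le_right _ _
    have h2 : (0:ℝ) < 2 * Real.exp K * V * (1 + L) + 1 := by positivity
    calc min 1 (c / (2 * Real.exp K * V * (1 + L) + 1)) * (2 * Real.exp K * V * (1 + L) + 1)
        ≤ c / (2 * Real.exp K * V * (1 + L) + 1) * (2 * Real.exp K * V * (1 + L) + 1) :=
          mul_le_mul_of_nonneg_right h1 h2.le
      _ = c := div_mul_cancel₀ c h2.ne'
  obtain ⟨δ', hδ'pos, hδ'⟩ :=
    Metric.continuousAt_iff.mp ((hZ.continuous_fderiv (by simp)).continuousAt (x := p)) ε₁ hε₁pos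
  obtain ⟨δ₁, hδ₁pos, hball⟩ :
      ∃ δ₁ : ℝ, 0 < δ₁ ∧ ∀ z ∈ closedBall p δ₁, ‖fderiv ℝ Z z - D‖ ≤ ε₁ := by
    refine ⟨δ' / 2, by positivity, fun z hz => ?_⟩
    have hz' : dist z p < δ' := lt_of_le_of_lt (mem_closedBall.1 hz) (by linarith)
    have := hδ' hz'
    rw [dist_eq_norm] at this
    exact this.le
  have hdiffZ : ∀ z ∈ closedBall p δ₁, DifferentiableAt ℝ Z z :=
    fun z _ => (hZ.differentiable (by simp)) z
  have htaylor : ∀ a ∈ closedBall p δ₁, ∀ b ∈ closedBall p δ₁,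
      ‖Z a - Z b - D (a - b)‖ ≤ ε₁ * ‖a - b‖ := fun a ha b hb =>
    Convex.norm_image_sub_le_of_norm_fderiv_le' hdiffZ hball (convex_closedBall p δ₁) hb ha
  have hlip : ∀ a ∈ closedBall p δ₁, ∀ b ∈ closedBall p δ₁, ‖Z a - Z b‖ ≤ K * ‖a - b‖ := by
    intro a ha b hb
    have h1 := htaylor a ha b hb
    have h2 : ‖D (a - b)‖ ≤ L * ‖a - b‖ := hDop _
    have h3 : ‖Z a - Z b‖ ≤ ‖Z a - Z b - D (a - b)‖ + ‖D (a - b)‖ := by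
      have := norm_add_le (Z a - Z b - D (a - b)) (D (a - b)); simpa using this
    have h4 : ε₁ * ‖a - b‖ ≤ 1 * ‖a - b‖ :=
      mul_le_mul_of_nonneg_right hε₁le1 (norm_nonneg _)
    nlinarith [norm_nonneg (a - b)]
  obtain ⟨M, hM0, hMbd⟩ : ∃ M : ℝ, 0 ≤ M ∧ ∀ z ∈ closedBall p δ₁, ‖Z z‖ ≤ M := by
    refine ⟨‖Z p‖ + K * δ₁, by positivity, fun z hz => ?_⟩
    have h1 := hlip z hz p (mem_closedBall_self hδ₁pos.le)
    have h2 : ‖z - p‖ ≤ δ₁ := by rwa [← dist_eq_norm]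
    have h3 : ‖Z z‖ ≤ ‖Z z - Z p‖ + ‖Z p‖ := by
      have := norm_add_le (Z z - Z p) (Z p); simpa using this
    nlinarith
  obtain ⟨s₀, hs₀pos, hs₀le1, hs₀M, hs₀le2⟩ :
      ∃ s₀ : ℝ, 0 < s₀ ∧ s₀ ≤ 1 ∧ M * s₀ ≤ δ₁ / 4 ∧
        s₀ * (2 * Real.exp K * (L ^ 2 * V + 1)) ≤ c := by
    refine ⟨min 1 (min (δ₁ / (4 * M + 1)) (c / (2 * Real.exp K * (L ^ 2 * V + 1)))),
      lt_min one_pos (lt_min (by positivity) (by positivity)), min_le_left _ _, ?_, ?_⟩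
    · have h1 : min 1 (min (δ₁ / (4 * M + 1)) (c / (2 * Real.exp K * (L ^ 2 * V + 1))))
          ≤ δ₁ / (4 * M + 1) := le_trans (min_le_right _ _) (min_le_left _ _)
      have h2 : M * min 1 (min (δ₁ / (4 * M + 1)) (c / (2 * Real.exp K * (L ^ 2 * V + 1))))
          ≤ M * (δ₁ / (4 * M + 1)) := mul_le_mul_of_nonneg_left h1 hM0
      have h3 : M * (δ₁ / (4 * M + 1)) ≤ δ₁ / 4 := by
        rw [mul_comm, div_mul_eq_mul_div, div_le_div_iff₀ (by positivity) (by norm_num : (0:ℝ) < 4)]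
        nlinarith
      linarith
    · have h1 : min 1 (min (δ₁ / (4 * M + 1)) (c / (2 * Real.exp K * (L ^ 2 * V + 1))))
          ≤ c / (2 * Real.exp K * (L ^ 2 * V + 1)) := le_trans (min_le_right _ _) (min_le_right _ _)
      have h2 : (0:ℝ) < 2 * Real.exp K * (L ^ 2 * V + 1) := by positivity
      calc min 1 (min (δ₁ / (4 * M + 1)) (c / (2 * Real.exp K * (L ^ 2 * V + 1))))
            * (2 * Real.exp K * (L ^ 2 * V + 1))
          ≤ c / (2 * Real.exp K * (L ^ 2 * V + 1)) * (2 * Real.exp K * (L ^ 2 * V + 1)) :=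
            mul_le_mul_of_nonneg_right h1 h2.le
        _ = c := div_mul_cancel₀ c h2.ne'
  -- Step 2: orbits starting near p stay in the ball for 0 ≤ s ≤ s₀
  have horbit : ∀ q ∈ closedBall p (δ₁ / 4), ∀ r ∈ Icc (0:ℝ) s₀, φ r q ∈ closedBall p δ₁ := by
    intro q hq
    by_contra hcon
    push_neg at hcon
    obtain ⟨rb, hrb, hout⟩ := hcon
    have hcont : Continuous fun r => φ r q := flowCont hgen q
    set A : Set ℝ := Icc (0:ℝ) s₀ ∩ {r | δ₁ ≤ dist (φ r q) p} with hAdef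
    have hA_closed : IsClosed A :=
      isClosed_Icc.inter (isClosed_le continuous_const ((hcont.dist continuous_const)))
    have hA_ne : A.Nonempty := by
      refine ⟨rb, hrb, ?_⟩
      simp only [mem_setOf_eq]
      have := mem_closedBall.not.1 hout
      push_neg at this
      exact this.le
    have hA_bdd : BddBelow A := ⟨0, fun r hr => hr.1.1⟩
    set t' := sInf A with ht'def
    have ht'A : t' ∈ A := hA_closed.csInf_mem hA_ne hA_bdd
    have ht'0 : 0 ≤ t' := ht'A.1.1
    have ht's₀ : t' ≤ s₀ := ht'A.1.2
    have hq14 : dist q p ≤ δ₁ / 4 := mem_closedBall.1 hq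
    have ht'pos : 0 < t' := by
      rcases ht'0.lt_or_eq with h | h
      · exact h
      · exfalso
        have := ht'A.2
        rw [← h] at this
        simp only [mem_setOf_eq, h0 q] at this
        linarith
    have hbefore : ∀ r, 0 ≤ r → r < t' → dist (φ r q) p < δ₁ := by
      intro r h0r hrt
      by_contra hh
      push_neg at hh
      have hrA : r ∈ A := ⟨⟨h0r, le_trans hrt.le ht's₀⟩, hh⟩
      exact absurd (csInf_le hA_bdd hrA) (not_le.2 hrt)
    have hend : dist (φ t' q) p ≤ δ₁ := by
      have htd : Tendsto (fun r => dist (φ r q) p) (𝓝[<] t') (𝓝 (dist (φ t' q) p)) :=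
        ((hcont.dist continuous_const).tendsto t').mono_left nhdsWithin_le_nhds
      refine le_of_tendsto htd ?_
      filter_upwards [Ico_mem_nhdsLT_of_mem (⟨ht'pos, le_refl t'⟩ : t' ∈ Ioc 0 t')] with r hr
      exact (hbefore r hr.1 hr.2).le
    have hinball : ∀ r ∈ Icc (0:ℝ) t', φ r q ∈ closedBall p δ₁ := by
      intro r ⟨h0r, hrt⟩
      rcases hrt.lt_or_eq with h | h
      · exact mem_closedBall.2 (hbefore r h0r h).le
      · rw [h]; exact mem_closedBall.2 hend
    have hgron := norm_le_gronwallBound_of_norm_deriv_right_le (f := fun r => φ r q - q)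
      (f' := fun r => Z (φ r q)) (δ := 0) (K := 0) (ε := M) (a := 0) (b := t')
      (((flowCont hgen q).sub continuous_const).continuousOn)
      (fun r _ => (((hgen r q).sub_const q)).hasDerivWithinAt)
      (by simp [h0 q])
      (fun r hr => by
        have := hMbd _ (hinball r ⟨hr.1, hr.2.le⟩)
        simpa using this)
    have h5 := hgron t' ⟨ht'0, le_refl t'⟩
    rw [gronwallBound_K0] at h5
    simp only [zero_add, sub_zero] at h5
    have h6 : dist (φ t' q) p ≤ ‖φ t' q - q‖ + dist q p := by
      rw [dist_eq_norm, dist_eq_norm]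
      have := norm_add_le (φ t' q - q) (q - p)
      simpa using this
    have h7 : M * t' ≤ M * s₀ := mul_le_mul_of_nonneg_left ht's₀ hM0
    have h8 : δ₁ ≤ dist (φ t' q) p := ht'A.2
    have h5' : ‖φ t' q - q‖ ≤ M * t' := h5
    linarith
  -- Step 3: the main estimate via Grönwall
  obtain ⟨h₀, hh₀pos, hh₀V⟩ : ∃ h₀ : ℝ, 0 < h₀ ∧ h₀ * V ≤ δ₁ / 4 := by
    refine ⟨δ₁ / (4 * V), by positivity, ?_⟩
    rw [div_mul_eq_mul_div, div_le_div_iff₀ (by positivity) (by norm_num : (0:ℝ) < 4)]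
    nlinarith
  obtain ⟨ε₂, hε₂0, hε₂ge, hε₂c⟩ :
      ∃ ε₂ : ℝ, 0 ≤ ε₂ ∧ ε₁ * (V * (1 + L)) + s₀ * (L ^ 2 * V) ≤ ε₂ ∧ ε₂ * Real.exp K ≤ c := by
    refine ⟨ε₁ * (V * (1 + L)) + s₀ * (L ^ 2 * V), by positivity, le_refl _, ?_⟩
    nlinarith [hε₁le2, hs₀le2, hε₁pos.le, hs₀pos.le, Real.exp_pos K, hVpos.le, hL0]
  have hmain : ∀ h : ℝ, 0 < h → h ≤ h₀ → ∀ s ∈ Icc (0:ℝ) s₀,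
      ‖φ s (p + h • v) - φ s p - h • v - s • (h • D v)‖ ≤ c * s * h := by
    intro h hh0 hhh₀ s hsmem
    have hq : p + h • v ∈ closedBall p (δ₁ / 4) := by
      rw [mem_closedBall, dist_eq_norm]
      have he : p + h • v - p = h • v := by abel
      rw [he, norm_smul, Real.norm_eq_abs, abs_of_pos hh0]
      calc h * ‖v‖ ≤ h₀ * V := by
            apply mul_le_mul hhh₀ hvV (norm_nonneg v) hh₀pos.le
        _ ≤ δ₁ / 4 := hh₀V
    set q : E := p + h • v with hqdef
    set f : ℝ → E := fun r => φ r q - φ r p - h • v - r • (h • D v) with hfdef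
    have hf0 : f 0 = 0 := by
      simp only [hfdef, h0 q, h0 p, zero_smul, sub_zero, hqdef, h0]
      abel
    have hfd : ∀ r, HasDerivAt f (Z (φ r q) - Z (φ r p) - h • D v) r := by
      intro r
      have h1 : HasDerivAt (fun r : ℝ => r • (h • D v)) (h • D v) r := by
        simpa using (hasDerivAt_id r).smul_const (h • D v)
      exact (((hgen r q).sub (hgen r p)).sub_const (h • v)).sub h1
    have hbd : ∀ r ∈ Ico (0:ℝ) s₀, ‖Z (φ r q) - Z (φ r p) - h • D v‖ ≤ K * ‖f r‖ + h * ε₂ := by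
      intro r hr
      have hrIcc : r ∈ Icc (0:ℝ) s₀ := ⟨hr.1, hr.2.le⟩
      have ha : φ r q ∈ closedBall p δ₁ := horbit q hq r hrIcc
      have hb : φ r p ∈ closedBall p δ₁ :=
        horbit p (mem_closedBall_self (by positivity)) r hrIcc
      have hab : φ r q - φ r p = f r + h • v + r • (h • D v) := by
        simp only [hfdef]; abel
      have h1 : ‖Z (φ r q) - Z (φ r p) - D (φ r q - φ r p)‖ ≤ ε₁ * ‖φ r q - φ r p‖ :=
        htaylor _ ha _ hb
      have h2 : D (φ r q - φ r p) - h • D v = D (φ r q - φ r p - h • v) := by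
        simp [map_sub, map_smul]
      have h3 : ‖D (φ r q - φ r p - h • v)‖ ≤ L * ‖φ r q - φ r p - h • v‖ := hDop _
      have h4 : φ r q - φ r p - h • v = f r + r • (h • D v) := by rw [hab]; abel
      have h5 : ‖r • (h • D v)‖ ≤ r * (h * (L * ‖v‖)) := by
        rw [norm_smul, norm_smul, Real.norm_eq_abs, Real.norm_eq_abs, abs_of_nonneg hr.1,
          abs_of_pos hh0]
        exact mul_le_mul_of_nonneg_left (mul_le_mul_of_nonneg_left (hDop v) hh0.le) hr.1
      have h6 : ‖φ r q - φ r p - h • v‖ ≤ ‖f r‖ + r * (h * (L * ‖v‖)) := by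
        rw [h4]
        exact (norm_add_le _ _).trans (by linarith)
      have h7 : ‖φ r q - φ r p‖ ≤ ‖f r‖ + h * ‖v‖ + r * (h * (L * ‖v‖)) := by
        rw [hab]
        refine (norm_add_le _ _).trans ?_
        have h8 : ‖f r + h • v‖ ≤ ‖f r‖ + h * ‖v‖ := by
          refine (norm_add_le _ _).trans ?_
          rw [norm_smul, Real.norm_eq_abs, abs_of_pos hh0]
        linarith
      have h9 : ‖Z (φ r q) - Z (φ r p) - h • D v‖
          ≤ ‖Z (φ r q) - Z (φ r p) - D (φ r q - φ r p)‖ + ‖D (φ r q - φ r p) - h • D v‖ := by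
        have h10 := norm_add_le (Z (φ r q) - Z (φ r p) - D (φ r q - φ r p))
          (D (φ r q - φ r p) - h • D v)
        have h11 : Z (φ r q) - Z (φ r p) - D (φ r q - φ r p) + (D (φ r q - φ r p) - h • D v)
            = Z (φ r q) - Z (φ r p) - h • D v := by abel
        rwa [h11] at h10
      rw [h2] at h9
      -- assemble
      have hrle : r ≤ s₀ := hr.2.le
      have hvV' : ‖v‖ ≤ V := hvV
      have e1 : ε₁ * ‖φ r q - φ r p‖ ≤ ε₁ * (‖f r‖ + h * ‖v‖ + r * (h * (L * ‖v‖))) :=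
        mul_le_mul_of_nonneg_left h7 hε₁pos.le
      have e2 : L * ‖φ r q - φ r p - h • v‖ ≤ L * (‖f r‖ + r * (h * (L * ‖v‖))) :=
        mul_le_mul_of_nonneg_left h6 hL0
      have e3 : ε₁ * (‖f r‖ + h * ‖v‖ + r * (h * (L * ‖v‖))) + L * (‖f r‖ + r * (h * (L * ‖v‖)))
          ≤ K * ‖f r‖ + h * ε₂ := by
        have key : ε₁ * ‖v‖ + ε₁ * (r * (L * ‖v‖)) + L * (r * (L * ‖v‖))
            ≤ ε₁ * (V * (1 + L)) + s₀ * (L ^ 2 * V) := by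
          have k1 : ε₁ * (r * (L * ‖v‖)) ≤ ε₁ * (L * ‖v‖) := by
            apply mul_le_mul_of_nonneg_left _ hε₁pos.le
            have h' : r * (L * ‖v‖) ≤ 1 * (L * ‖v‖) :=
              mul_le_mul_of_nonneg_right (by linarith) (by positivity)
            linarith
          have k2 : ε₁ * ‖v‖ + ε₁ * (L * ‖v‖) ≤ ε₁ * (V * (1 + L)) := by
            nlinarith [mul_le_mul_of_nonneg_left
              (mul_le_mul_of_nonneg_right hvV (show (0:ℝ) ≤ 1 + L by linarith)) hε₁pos.le]
          have k3 : L * (r * (L * ‖v‖)) ≤ s₀ * (L ^ 2 * V) := by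
            nlinarith [mul_le_mul (mul_le_mul_of_nonneg_right hrle (sq_nonneg L)) hvV
              (norm_nonneg v) (by positivity : (0:ℝ) ≤ s₀ * L ^ 2)]
          linarith
        have knn : (ε₁ + L) * ‖f r‖ ≤ K * ‖f r‖ := by
          apply mul_le_mul_of_nonneg_right _ (norm_nonneg _)
          linarith
        nlinarith [norm_nonneg (f r), hh0.le, mul_le_mul_of_nonneg_left key hh0.le]
      calc ‖Z (φ r q) - Z (φ r p) - h • D v‖
          ≤ ε₁ * ‖φ r q - φ r p‖ + L * ‖φ r q - φ r p - h • v‖ := by linarith [h9, h1, h3]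
        _ ≤ K * ‖f r‖ + h * ε₂ := by linarith [e1, e2, e3]
    have hcf : Continuous f := by
      have hc1 : Continuous fun r : ℝ => r • (h • D v) := continuous_id.smul continuous_const
      exact (((flowCont hgen q).sub (flowCont hgen p)).sub continuous_const).sub hc1
    have hgron := norm_le_gronwallBound_of_norm_deriv_right_le (f := f)
      (f' := fun r => Z (φ r q) - Z (φ r p) - h • D v) (δ := 0) (K := K) (ε := h * ε₂)
      (a := 0) (b := s₀) hcf.continuousOn
      (fun r _ => (hfd r).hasDerivWithinAt) (by simp [hf0]) hbd
    have hgs := hgron s hsmem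
    rw [gronwallBound_of_K_ne_0 hKpos.ne'] at hgs
    simp only [zero_mul, zero_add, sub_zero] at hgs
    have hs0 : 0 ≤ s := hsmem.1
    have hKs : K * s ≤ K * 1 := mul_le_mul_of_nonneg_left (le_trans hsmem.2 hs₀le1) hKpos.le
    have hexp : Real.exp (K * s) - 1 ≤ K * s * Real.exp K := by
      have h1 : Real.exp (K * s) - 1 ≤ K * s * Real.exp (K * s) :=
        exp_sub_one_le_mul_exp (by positivity)
      have h2 : Real.exp (K * s) ≤ Real.exp K := Real.exp_le_exp.2 (by linarith)
      nlinarith [Real.exp_pos (K * s), hKpos, hs0,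
        mul_le_mul_of_nonneg_left h2 (show (0:ℝ) ≤ K * s by positivity)]
    have hfin : h * ε₂ / K * (Real.exp (K * s) - 1) ≤ c * s * h := by
      have hn : 0 ≤ h * ε₂ / K := by positivity
      have h1 : h * ε₂ / K * (Real.exp (K * s) - 1) ≤ h * ε₂ / K * (K * s * Real.exp K) :=
        mul_le_mul_of_nonneg_left hexp hn
      have h2 : h * ε₂ / K * (K * s * Real.exp K) = h * s * (ε₂ * Real.exp K) := by
        field_simp
      have h3 : h * s * (ε₂ * Real.exp K) ≤ h * s * c :=
        mul_le_mul_of_nonneg_left hε₂c (by positivity)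
      calc h * ε₂ / K * (Real.exp (K * s) - 1) ≤ h * s * (ε₂ * Real.exp K) := by
            rw [← h2]; exact h1
        _ ≤ h * s * c := h3
        _ = c * s * h := by ring
    exact le_trans hgs hfin
  -- Step 4: pass to the limit h → 0⁺
  have key : ∀ s, 0 ≤ s → s ≤ s₀ → ‖fderiv ℝ (φ s) p v - v - s • D v‖ ≤ c * s := by
    intro s hs0 hss
    rcases hs0.lt_or_eq with hspos | hseq
    · have hder : HasDerivAt (fun h : ℝ => φ s (p + h • v)) (fderiv ℝ (φ s) p v) 0 := by
        have h1 : DifferentiableAt ℝ (φ s) p := ((hsm s).differentiable (by simp)) p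
        have h2 : HasDerivAt (fun h : ℝ => p + h • v) v 0 := by
          simpa using ((hasDerivAt_id (0:ℝ)).smul_const v).const_add p
        have h5 : HasFDerivAt (φ s) (fderiv ℝ (φ s) p) ((fun h : ℝ => p + h • v) 0) := by
          rw [show (fun h : ℝ => p + h • v) 0 = p by simp]
          exact h1.hasFDerivAt
        exact h5.comp_hasDerivAt 0 h2
      have hslope := hasDerivAt_iff_tendsto_slope.mp hder
      have hslope' : Tendsto (slope (fun h : ℝ => φ s (p + h • v)) 0) (𝓝[>] 0)
          (𝓝 (fderiv ℝ (φ s) p v)) :=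
        hslope.mono_left (nhdsWithin_mono _ (fun x hx => ne_of_gt hx))
      have hT : Tendsto (fun h : ℝ => ‖slope (fun h : ℝ => φ s (p + h • v)) 0 h - v - s • D v‖)
          (𝓝[>] 0) (𝓝 ‖fderiv ℝ (φ s) p v - v - s • D v‖) :=
        ((hslope'.sub tendsto_const_nhds).sub tendsto_const_nhds).norm
      refine le_of_tendsto hT ?_
      filter_upwards [Ioc_mem_nhdsGT_of_mem (⟨le_refl (0:ℝ), hh₀pos⟩ : (0:ℝ) ∈ Ico 0 h₀)]
        with h hh
      have hm := hmain h hh.1 hh.2 s ⟨hs0, hss⟩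
      have hsl : slope (fun h : ℝ => φ s (p + h • v)) 0 h = h⁻¹ • (φ s (p + h • v) - φ s p) := by
        rw [slope_def_module]
        simp
      rw [hsl]
      have hne : h ≠ 0 := hh.1.ne'
      have hfac : h⁻¹ • (φ s (p + h • v) - φ s p) - v - s • D v
          = h⁻¹ • (φ s (p + h • v) - φ s p - h • v - s • (h • D v)) := by
        have e1 : h⁻¹ • (h • v) = v := by
          rw [smul_smul, inv_mul_cancel₀ hh.1.ne', one_smul]
        have e2 : h⁻¹ • (s • (h • D v)) = s • D v := by
          rw [smul_smul, smul_smul,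
            show h⁻¹ * s * h = s by field_simp]
        conv_rhs => rw [smul_sub, smul_sub]
        rw [e1, e2]
      rw [hfac, norm_smul, Real.norm_eq_abs, abs_of_pos (inv_pos.2 hh.1)]
      calc h⁻¹ * ‖φ s (p + h • v) - φ s p - h • v - s • (h • D v)‖ ≤ h⁻¹ * (c * s * h) :=
            mul_le_mul_of_nonneg_left hm (inv_pos.2 hh.1).le
        _ = c * s := by field_simp
    · rw [← hseq]
      simp [hF0]
  -- Step 5: conclude the little-o statement
  filter_upwards [Icc_mem_nhdsGE hs₀pos] with s hs
  have hk := key s hs.1 hs.2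
  calc ‖(fun s' => fderiv ℝ (φ s') p v) s - fderiv ℝ (φ 0) p v - (s - 0) • D v‖
      = ‖fderiv ℝ (φ s) p v - v - s • D v‖ := by rw [hF0, sub_zero]
    _ ≤ c * s := hk
    _ = c * ‖s - 0‖ := by rw [sub_zero, Real.norm_eq_abs, abs_of_nonneg hs.1]



/-- Two-sided version at `t = 0`. -/
private lemma key_zero {Z : E → E} {φ : ℝ → E → E} (hZ : ContDiff ℝ (⊤ : ℕ∞) Z)
    (h0 : ∀ x, φ 0 x = x) (hadd : ∀ s t x, φ (s + t) x = φ s (φ t x))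
    (hsm : ∀ t, ContDiff ℝ (⊤ : ℕ∞) (φ t))
    (hgen : ∀ t x, HasDerivAt (fun s => φ s x) (Z (φ t x)) t) (p v : E) :
    HasDerivAt (fun s => fderiv ℝ (φ s) p v) (fderiv ℝ Z p v) 0 := by
  have hright := key_right hZ h0 hsm hgen p v
  -- reversed flow
  set ψ : ℝ → E → E := fun s x => φ (-s) x with hψdef
  have hψ0 : ∀ x, ψ 0 x = x := by intro x; simp [hψdef, h0]
  have hψsm : ∀ t, ContDiff ℝ (⊤ : ℕ∞) (ψ t) := fun t => hsm (-t)
  have hψgen : ∀ t x, HasDerivAt (fun s => ψ s x) ((fun y => -Z y) (ψ t x)) t := by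
    intro t x
    have h1 : HasDerivAt (fun s : ℝ => φ s x) (Z (φ (-t) x)) (-t) := hgen (-t) x
    have h2 : HasDerivAt (fun s : ℝ => -s) (-1 : ℝ) t := by
      simpa using (hasDerivAt_neg' (x := t))
    have h3 := h1.scomp t h2
    simpa [hψdef, Function.comp_def] using h3
  have hZneg : ContDiff ℝ (⊤ : ℕ∞) (fun y => -Z y) := hZ.neg
  have hleft0 := key_right hZneg hψ0 hψsm hψgen p v
  -- convert: fderiv (ψ s) p v = fderiv (φ (-s)) p v
  have hψf : ∀ s, fderiv ℝ (ψ s) p v = fderiv ℝ (φ (-s)) p v := fun s => rfl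
  have hneg : fderiv ℝ (fun y => -Z y) p v = -(fderiv ℝ Z p v) := by
    rw [fderiv_fun_neg]; rfl
  rw [hneg] at hleft0
  -- turn into a left-derivative for φ
  have hmaps : MapsTo (fun s : ℝ => -s) (Iic 0) (Ici 0) := fun s hs => by
    simp only [mem_Ici]; simp only [mem_Iic] at hs; linarith
  have hninner : HasDerivWithinAt (fun s : ℝ => -s) (-1 : ℝ) (Iic 0) 0 := by
    simpa using ((hasDerivAt_neg' (x := (0:ℝ)))).hasDerivWithinAt
  have hcomp := HasDerivWithinAt.scomp (0:ℝ)
    (by simpa using hleft0 : HasDerivWithinAt (fun s => fderiv ℝ (φ (-s)) p v)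
      (-(fderiv ℝ Z p v)) (Ici 0) ((fun s : ℝ => -s) 0)) hninner hmaps
  have hleft : HasDerivWithinAt (fun s => fderiv ℝ (φ s) p v) (fderiv ℝ Z p v) (Iic 0) 0 := by
    have heq : ((fun s => fderiv ℝ (φ (-s)) p v) ∘ fun s : ℝ => -s)
        = fun s => fderiv ℝ (φ s) p v := by
      funext s; simp [Function.comp, neg_neg]
    have hval : (-1 : ℝ) • -(fderiv ℝ Z p v) = fderiv ℝ Z p v := by simp
    rw [heq, hval] at hcomp
    exact hcomp
  have huni := hleft.union hright
  rw [Iic_union_Ici] at huni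
  exact hasDerivWithinAt_univ.mp huni

/-- Chain rule for the flow. -/
private lemma flow_chain {φ : ℝ → E → E}
    (hadd : ∀ s t x, φ (s + t) x = φ s (φ t x)) (hsm : ∀ t, ContDiff ℝ (⊤ : ℕ∞) (φ t))
    (s t : ℝ) (x : E) (v : E) :
    fderiv ℝ (φ (s + t)) x v = fderiv ℝ (φ s) (φ t x) (fderiv ℝ (φ t) x v) := by
  have h1 : φ (s + t) = (φ s) ∘ (φ t) := by
    funext y; exact hadd s t y
  rw [h1, fderiv_comp x (((hsm s).differentiable (by simp)) _) (((hsm t).differentiable (by simp)) _)]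
  rfl

/-- Derivative of the flow's space-derivative at every time. -/
private lemma key_all {Z : E → E} {φ : ℝ → E → E} (hZ : ContDiff ℝ (⊤ : ℕ∞) Z)
    (h0 : ∀ x, φ 0 x = x) (hadd : ∀ s t x, φ (s + t) x = φ s (φ t x))
    (hsm : ∀ t, ContDiff ℝ (⊤ : ℕ∞) (φ t))
    (hgen : ∀ t x, HasDerivAt (fun s => φ s x) (Z (φ t x)) t) (t : ℝ) (x v : E) :
    HasDerivAt (fun s => fderiv ℝ (φ s) x v)
      (fderiv ℝ Z (φ t x) (fderiv ℝ (φ t) x v)) t := by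
  set p := φ t x with hpdef
  set w := fderiv ℝ (φ t) x v with hwdef
  have hzero : HasDerivAt (fun s => fderiv ℝ (φ s) p w) (fderiv ℝ Z p w) 0 :=
    key_zero hZ h0 hadd hsm hgen p w
  have hshift : ∀ u : ℝ, fderiv ℝ (φ (u - t + t)) x v = fderiv ℝ (φ (u - t)) p w := fun u =>
    flow_chain hadd hsm (u - t) t x v
  have hinner : HasDerivAt (fun u : ℝ => u - t) (1 : ℝ) t := by
    simpa using (hasDerivAt_id t).sub_const t
  have hzero' : HasDerivAt (fun s => fderiv ℝ (φ s) p w) (fderiv ℝ Z p w)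
      ((fun u : ℝ => u - t) t) := by simpa using hzero
  have hcomp := HasDerivAt.scomp (h := fun u : ℝ => u - t)
    (g₁ := fun s => fderiv ℝ (φ s) p w) t hzero' hinner
  have heq : ((fun s => fderiv ℝ (φ s) p w) ∘ fun u : ℝ => u - t)
      = fun u => fderiv ℝ (φ u) x v := by
    funext u
    have := hshift u
    rw [sub_add_cancel] at this
    simp only [Function.comp]
    rw [← this]
  rw [heq] at hcomp
  simpa using hcomp

/-- Uniqueness for linear ODEs: a solution vanishing at `0` vanishes identically. -/
private lemma linear_ode_zero (B : ℝ → E →L[ℝ] E) (hB : Continuous B) (f : ℝ → E)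
    (hf : ∀ t, HasDerivAt f (B t (f t)) t) (hf0 : f 0 = 0) : ∀ t, f t = 0 := by
  have main : ∀ (B' : ℝ → E →L[ℝ] E), Continuous B' → ∀ (g : ℝ → E),
      (∀ t, HasDerivAt g (B' t (g t)) t) → g 0 = 0 → ∀ t, 0 ≤ t → g t = 0 := by
    intro B' hB' g hg hg0 t ht
    rcases eq_or_lt_of_le ht with rfl | htpos
    · exact hg0
    obtain ⟨C, hC⟩ := (isCompact_Icc (a := (0:ℝ)) (b := t)).exists_bound_of_continuousOn
      hB'.continuousOn
    set K := max C 0 with hKdef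
    have hK0 : 0 ≤ K := le_max_right _ _
    have hgron := norm_le_gronwallBound_of_norm_deriv_right_le (f := g)
      (f' := fun r => B' r (g r)) (δ := 0) (K := K) (ε := 0) (a := 0) (b := t)
      (fun r _ => (hg r).continuousAt.continuousWithinAt)
      (fun r _ => (hg r).hasDerivWithinAt)
      (by simp [hg0])
      (fun r hr => by
        have h1 : ‖B' r (g r)‖ ≤ ‖B' r‖ * ‖g r‖ := (B' r).le_opNorm _
        have h2 : ‖B' r‖ ≤ C := hC r ⟨hr.1, hr.2.le⟩
        have h3 : ‖B' r‖ * ‖g r‖ ≤ K * ‖g r‖ :=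
          mul_le_mul_of_nonneg_right (le_trans h2 (le_max_left _ _)) (norm_nonneg _)
        simpa using le_trans h1 h3)
    have := hgron t ⟨ht, le_refl t⟩
    rw [gronwallBound_ε0_δ0] at this
    exact norm_le_zero_iff.1 this
  intro t
  rcases le_total 0 t with ht | ht
  · exact main B hB f hf hf0 t ht
  · -- reverse time
    set B' : ℝ → E →L[ℝ] E := fun s => -(B (-s)) with hB'def
    have hB'c : Continuous B' := (hB.comp continuous_neg).neg
    set g : ℝ → E := fun s => f (-s) with hgdef
    have hg : ∀ s, HasDerivAt g (B' s (g s)) s := by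
      intro s
      have h1 : HasDerivAt f (B (-s) (f (-s))) (-s) := hf (-s)
      have h2 : HasDerivAt (fun u : ℝ => -u) (-1 : ℝ) s := by simpa using (hasDerivAt_neg' (x := s))
      have h3 := h1.scomp s h2
      have : (-1 : ℝ) • B (-s) (f (-s)) = B' s (g s) := by
        simp [hB'def, hgdef]
      rw [this] at h3
      exact h3
    have hg0 : g 0 = 0 := by simp [hgdef, hf0]
    have := main B' hB'c g hg hg0 (-t) (by linarith)
    simpa [hgdef] using this

/-- Transport lemma: if `u` solves the linearized ODE along the orbit of `x` with `u 0 = w`,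
then `u t = fderiv (φ t) x w`. -/
private lemma flow_transport {Z : E → E} {φ : ℝ → E → E} (hZ : ContDiff ℝ (⊤ : ℕ∞) Z)
    (h0 : ∀ x, φ 0 x = x) (hadd : ∀ s t x, φ (s + t) x = φ s (φ t x))
    (hsm : ∀ t, ContDiff ℝ (⊤ : ℕ∞) (φ t))
    (hgen : ∀ t x, HasDerivAt (fun s => φ s x) (Z (φ t x)) t) (x w : E) (u : ℝ → E)
    (hu : ∀ t, HasDerivAt u (fderiv ℝ Z (φ t x) (u t)) t) (hu0 : u 0 = w) :
    ∀ t, fderiv ℝ (φ t) x w = u t := by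
  set B : ℝ → E →L[ℝ] E := fun t => fderiv ℝ Z (φ t x) with hBdef
  have hBc : Continuous B :=
    (hZ.continuous_fderiv (by simp)).comp (flowCont hgen x)
  set f : ℝ → E := fun t => fderiv ℝ (φ t) x w - u t with hfdef
  have hfd : ∀ t, HasDerivAt f (B t (f t)) t := by
    intro t
    have h1 := key_all hZ h0 hadd hsm hgen t x w
    have h2 := (h1.sub (hu t))
    have h3 : fderiv ℝ Z (φ t x) (fderiv ℝ (φ t) x w) - fderiv ℝ Z (φ t x) (u t)
        = B t (f t) := by
      rw [hBdef, hfdef]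
      simp [map_sub]
    rw [h3] at h2
    exact h2
  have hf0 : f 0 = 0 := by
    simp only [hfdef, fderiv_flow_zero h0, hu0]
    simp
  intro t
  have := linear_ode_zero B hBc f hfd hf0 t
  have h4 : fderiv ℝ (φ t) x w - u t = 0 := this
  have := sub_eq_zero.mp h4
  exact this
  


/-- The flow pushes its own generator forward to itself. -/
private lemma flow_push_self {Z : E → E} {φ : ℝ → E → E}
    (h0 : ∀ x, φ 0 x = x) (hadd : ∀ s t x, φ (s + t) x = φ s (φ t x))
    (hsm : ∀ t, ContDiff ℝ (⊤ : ℕ∞) (φ t))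
    (hgen : ∀ t x, HasDerivAt (fun s => φ s x) (Z (φ t x)) t) (t : ℝ) (x : E) :
    fderiv ℝ (φ t) x (Z x) = Z (φ t x) := by
  have h1 : HasDerivAt (fun s => φ t (φ s x)) (fderiv ℝ (φ t) x (Z x)) 0 := by
    have hd : HasFDerivAt (φ t) (fderiv ℝ (φ t) x) ((fun s : ℝ => φ s x) 0) := by
      rw [show (fun s : ℝ => φ s x) 0 = x from h0 x]
      exact (((hsm t).differentiable (by simp)) x).hasFDerivAt
    have := hd.comp_hasDerivAt (x := (0:ℝ)) (by simpa [h0 x] using hgen 0 x)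
    exact this
  have h2 : HasDerivAt (fun s => φ t (φ s x)) (Z (φ t x)) 0 := by
    have heq : (fun s => φ (t + s) x) = fun s => φ t (φ s x) := by
      funext s; exact hadd t s x
    have hinner : HasDerivAt (fun s : ℝ => t + s) (1 : ℝ) 0 := by
      simpa using (hasDerivAt_id (0:ℝ)).const_add t
    have houter : HasDerivAt (fun s : ℝ => φ s x) (Z (φ t x)) ((fun s : ℝ => t + s) 0) := by
      simpa using hgen t x
    have hcomp := HasDerivAt.scomp (h := fun s : ℝ => t + s)
      (g₁ := fun s : ℝ => φ s x) 0 houter hinner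
    rw [show ((fun s : ℝ => φ s x) ∘ fun s : ℝ => t + s) = fun s => φ (t + s) x from rfl] at hcomp
    rw [heq] at hcomp
    simpa using hcomp
  exact h1.unique h2

/-- Pushforward of a field `W` with `[Z,W] = W` under the flow of `Z`. -/
private lemma flow_push_bracket {Z W : E → E} {φ : ℝ → E → E}
    (hZ : ContDiff ℝ (⊤ : ℕ∞) Z) (hW : ContDiff ℝ (⊤ : ℕ∞) W)
    (hbr : ∀ z, fderiv ℝ W z (Z z) - fderiv ℝ Z z (W z) = W z)
    (h0 : ∀ x, φ 0 x = x) (hadd : ∀ s t x, φ (s + t) x = φ s (φ t x))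
    (hsm : ∀ t, ContDiff ℝ (⊤ : ℕ∞) (φ t))
    (hgen : ∀ t x, HasDerivAt (fun s => φ s x) (Z (φ t x)) t) (t : ℝ) (x : E) :
    fderiv ℝ (φ t) x (W x) = Real.exp (-t) • W (φ t x) := by
  have hu : ∀ t, HasDerivAt (fun t => Real.exp (-t) • W (φ t x))
      (fderiv ℝ Z (φ t x) (Real.exp (-t) • W (φ t x))) t := by
    intro t
    have h1 : HasDerivAt (fun t : ℝ => Real.exp (-t)) (-Real.exp (-t)) t := by
      have := (Real.hasDerivAt_exp (-t)).scomp t (by simpa using (hasDerivAt_neg' (x := t)))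
      simpa [Function.comp_def] using this
    have h2 : HasDerivAt (fun t => W (φ t x)) (fderiv ℝ W (φ t x) (Z (φ t x))) t := by
      have hd : HasFDerivAt W (fderiv ℝ W (φ t x)) ((fun s : ℝ => φ s x) t) :=
        ((hW.differentiable (by simp)) _).hasFDerivAt
      exact hd.comp_hasDerivAt t (hgen t x)
    have h3 := h1.smul h2
    have h4 : Real.exp (-t) • fderiv ℝ W (φ t x) (Z (φ t x)) + (-Real.exp (-t)) • W (φ t x)
        = fderiv ℝ Z (φ t x) (Real.exp (-t) • W (φ t x)) := by
      have hb := hbr (φ t x)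
      have h5 : fderiv ℝ W (φ t x) (Z (φ t x)) = W (φ t x) + fderiv ℝ Z (φ t x) (W (φ t x)) :=
        sub_eq_iff_eq_add.mp hb
      rw [h5, map_smul]
      rw [smul_add]
      module
    rw [h4] at h3
    exact h3
  have hu0 : Real.exp (-(0:ℝ)) • W (φ 0 x) = W x := by simp [h0]
  exact flow_transport hZ h0 hadd hsm hgen x (W x) _ hu hu0 t

/-- Pushforward of `Z` under the flow of `W` when `[Z,W] = W`. -/
private lemma flow_push_bracket' {Z W : E → E} {ψ : ℝ → E → E}
    (hZ : ContDiff ℝ (⊤ : ℕ∞) Z) (hW : ContDiff ℝ (⊤ : ℕ∞) W)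
    (hbr : ∀ z, fderiv ℝ W z (Z z) - fderiv ℝ Z z (W z) = W z)
    (h0 : ∀ x, ψ 0 x = x) (hadd : ∀ s t x, ψ (s + t) x = ψ s (ψ t x))
    (hsm : ∀ t, ContDiff ℝ (⊤ : ℕ∞) (ψ t))
    (hgen : ∀ t x, HasDerivAt (fun s => ψ s x) (W (ψ t x)) t) (s : ℝ) (x : E) :
    fderiv ℝ (ψ s) x (Z x) = Z (ψ s x) + s • W (ψ s x) := by
  have hu : ∀ s, HasDerivAt (fun s => Z (ψ s x) + s • W (ψ s x))
      (fderiv ℝ W (ψ s x) (Z (ψ s x) + s • W (ψ s x))) s := by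
    intro s
    have h2 : HasDerivAt (fun s => Z (ψ s x)) (fderiv ℝ Z (ψ s x) (W (ψ s x))) s :=
      (((hZ.differentiable (by simp)) _).hasFDerivAt).comp_hasDerivAt s (hgen s x)
    have h3 : HasDerivAt (fun s => W (ψ s x)) (fderiv ℝ W (ψ s x) (W (ψ s x))) s :=
      (((hW.differentiable (by simp)) _).hasFDerivAt).comp_hasDerivAt s (hgen s x)
    have h1 : HasDerivAt (fun u : ℝ => u) (1:ℝ) s := hasDerivAt_id s
    have h4 := h1.smul h3
    have h5 := h2.add h4
    have h6 : fderiv ℝ Z (ψ s x) (W (ψ s x)) + (s • fderiv ℝ W (ψ s x) (W (ψ s x))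
        + (1:ℝ) • W (ψ s x)) = fderiv ℝ W (ψ s x) (Z (ψ s x) + s • W (ψ s x)) := by
      have hb := hbr (ψ s x)
      have h7 : fderiv ℝ Z (ψ s x) (W (ψ s x)) = fderiv ℝ W (ψ s x) (Z (ψ s x)) - W (ψ s x) := by
        have h8 := sub_eq_iff_eq_add.mp hb
        rw [h8]; abel
      rw [h7, map_add, map_smul]
      module
    rw [h6] at h5
    exact h5
  have hu0 : Z (ψ 0 x) + (0:ℝ) • W (ψ 0 x) = Z x := by simp [h0]
  exact flow_transport hW h0 hadd hsm hgen x (Z x) _ hu hu0 s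


end FlowAux



/-- Let `X, Y` be complete conformal vector fields of a pseudo-Riemannian
manifold with `[X,Y] = Y` and `g(X,X) > 0` everywhere, and set `g₀ = g / g(X,X)`.  If
`g₀(Y,Y)` and `g₀(X,Y)` are bounded along every orbit of the flow `φ` of `X`, then `Y` is
everywhere `g₀`-isotropic and `g₀`-orthogonal to `X`, and the flows of `X` and `Y` both
preserve `g₀`, i.e. `X` and `Y` are Killing fields of `g₀`. -/
theorem bounded_conformal_pair_is_killing
    (E : Type*) [NormedAddCommGroup E] [NormedSpace ℝ E]
    (g : E → LinearMap.BilinForm ℝ E)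
    (hsymm : ∀ x u v, g x u v = g x v u)
    (hnondeg : ∀ x, (g x).Nondegenerate)
    (X Y : E → E)
    (hX : ContDiff ℝ (⊤ : ℕ∞) X) (hY : ContDiff ℝ (⊤ : ℕ∞) Y)
    (hXY : lieBracket ℝ X Y = Y)
    (hXX : ∀ x, 0 < g x (X x) (X x))
    (g₀ : E → LinearMap.BilinForm ℝ E)
    (hg₀ : ∀ x, g₀ x = (g x (X x) (X x))⁻¹ • g x)
    -- the flows of `X` and `Y` (completeness):
    (φX φY : ℝ → E → E)
    (hφX0 : ∀ x, φX 0 x = x) (hφXadd : ∀ s t x, φX (s + t) x = φX s (φX t x))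
    (hφXsmooth : ∀ t, ContDiff ℝ (⊤ : ℕ∞) (φX t))
    (hφXgen : ∀ t x, HasDerivAt (fun s => φX s x) (X (φX t x)) t)
    (hφY0 : ∀ x, φY 0 x = x) (hφYadd : ∀ s t x, φY (s + t) x = φY s (φY t x))
    (hφYsmooth : ∀ t, ContDiff ℝ (⊤ : ℕ∞) (φY t))
    (hφYgen : ∀ t x, HasDerivAt (fun s => φY s x) (Y (φY t x)) t)
    -- `X` and `Y` are conformal vector fields:
    (hconfX : ∀ t x, ∃ c : ℝ, 0 < c ∧ ∀ u v,
      g (φX t x) (fderiv ℝ (φX t) x u) (fderiv ℝ (φX t) x v) = c * g x u v)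
    (hconfY : ∀ t x, ∃ c : ℝ, 0 < c ∧ ∀ u v,
      g (φY t x) (fderiv ℝ (φY t) x u) (fderiv ℝ (φY t) x v) = c * g x u v)
    -- boundedness along the orbits of the flow of `X`:
    (hbound : ∀ x, ∃ C : ℝ, ∀ t,
      |g₀ (φX t x) (Y (φX t x)) (Y (φX t x))| ≤ C ∧
      |g₀ (φX t x) (X (φX t x)) (Y (φX t x))| ≤ C) :
    (∀ x, g₀ x (Y x) (Y x) = 0 ∧ g₀ x (X x) (Y x) = 0) ∧
    (∀ t x u v, g₀ (φX t x) (fderiv ℝ (φX t) x u) (fderiv ℝ (φX t) x v) = g₀ x u v) ∧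
    (∀ t x u v, g₀ (φY t x) (fderiv ℝ (φY t) x u) (fderiv ℝ (φY t) x v) = g₀ x u v) := by
  -- basic reformulations
  have hg₀app : ∀ z (u w : E), g₀ z u w = (g z (X z) (X z))⁻¹ * g z u w := by
    intro z u w
    rw [hg₀ z]
    simp [LinearMap.smul_apply, smul_eq_mul]
  have hbr : ∀ z, fderiv ℝ Y z (X z) - fderiv ℝ X z (Y z) = Y z := fun z => congrFun hXY z
  have hAX : ∀ t x, fderiv ℝ (φX t) x (X x) = X (φX t x) :=
    flow_push_self hφX0 hφXadd hφXsmooth hφXgen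
  have hAY : ∀ t x, fderiv ℝ (φX t) x (Y x) = Real.exp (-t) • Y (φX t x) :=
    flow_push_bracket hX hY hbr hφX0 hφXadd hφXsmooth hφXgen
  have hBX : ∀ s x, fderiv ℝ (φY s) x (X x) = X (φY s x) + s • Y (φY s x) :=
    flow_push_bracket' hX hY hbr hφY0 hφYadd hφYsmooth hφYgen
  have hconv : ∀ z (u w : E), g₀ z u w = 0 → g z u w = 0 := by
    intro z u w hz
    rw [hg₀app] at hz
    rcases mul_eq_zero.mp hz with h | h
    · exact absurd h (inv_ne_zero (hXX z).ne')
    · exact h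
  -- Part 1
  have part1 : ∀ x, g₀ x (Y x) (Y x) = 0 ∧ g₀ x (X x) (Y x) = 0 := by
    intro x
    obtain ⟨C, hC⟩ := hbound x
    have key : ∀ t, g₀ (φX t x) (Y (φX t x)) (Y (φX t x))
          = Real.exp (2 * t) * g₀ x (Y x) (Y x)
        ∧ g₀ (φX t x) (X (φX t x)) (Y (φX t x)) = Real.exp t * g₀ x (X x) (Y x) := by
      intro t
      obtain ⟨c, hcpos, hc⟩ := hconfX t x
      have hcXX : g (φX t x) (X (φX t x)) (X (φX t x)) = c * g x (X x) (X x) := by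
        have h := hc (X x) (X x); rwa [hAX t x] at h
      constructor
      · have h := hc (Y x) (Y x)
        rw [hAY t x] at h
        simp only [map_smul, LinearMap.smul_apply, smul_eq_mul] at h
        have hG : g (φX t x) (Y (φX t x)) (Y (φX t x))
            = Real.exp (2 * t) * (c * g x (Y x) (Y x)) := by
          have h3 : Real.exp (2 * t) * (Real.exp (-t) * (Real.exp (-t)
              * g (φX t x) (Y (φX t x)) (Y (φX t x))))
              = g (φX t x) (Y (φX t x)) (Y (φX t x)) := by
            rw [← mul_assoc, ← mul_assoc, ← Real.exp_add, ← Real.exp_add,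
              show 2 * t + -t + -t = 0 by ring, Real.exp_zero, one_mul]
          calc g (φX t x) (Y (φX t x)) (Y (φX t x))
              = Real.exp (2 * t) * (Real.exp (-t) * (Real.exp (-t)
                * g (φX t x) (Y (φX t x)) (Y (φX t x)))) := h3.symm
            _ = Real.exp (2 * t) * (c * g x (Y x) (Y x)) := by rw [h]
        rw [hg₀app, hg₀app, hcXX, hG]
        field_simp [(hXX x).ne', hcpos.ne']
      · have h := hc (X x) (Y x)
        rw [hAY t x, hAX t x] at h
        simp only [map_smul, LinearMap.smul_apply, smul_eq_mul] at h
        have hG : g (φX t x) (X (φX t x)) (Y (φX t x))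
            = Real.exp t * (c * g x (X x) (Y x)) := by
          have h3 : Real.exp t * (Real.exp (-t)
              * g (φX t x) (X (φX t x)) (Y (φX t x)))
              = g (φX t x) (X (φX t x)) (Y (φX t x)) := by
            rw [← mul_assoc, ← Real.exp_add, show t + -t = 0 by ring, Real.exp_zero, one_mul]
          calc g (φX t x) (X (φX t x)) (Y (φX t x))
              = Real.exp t * (Real.exp (-t) * g (φX t x) (X (φX t x)) (Y (φX t x))) := h3.symm
            _ = Real.exp t * (c * g x (X x) (Y x)) := by rw [h]
        rw [hg₀app, hg₀app, hcXX, hG]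
        field_simp [(hXX x).ne', hcpos.ne']
    constructor
    · by_contra ha
      have hapos : 0 < |g₀ x (Y x) (Y x)| := abs_pos.2 ha
      have hC0 : |g₀ x (Y x) (Y x)| ≤ C := by
        have := (hC 0).1
        rw [(key 0).1] at this
        simpa using this
      set u : ℝ := (C + 1) / |g₀ x (Y x) (Y x)| with hudef
      have hupos : 0 < u := div_pos (by linarith) hapos
      set t : ℝ := Real.log u / 2 with htdef
      have hexp : Real.exp (2 * t) = u := by
        rw [htdef, show 2 * (Real.log u / 2) = Real.log u by ring, Real.exp_log hupos]
      have := (hC t).1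
      rw [(key t).1, abs_mul, abs_of_pos (Real.exp_pos _), hexp, hudef,
        div_mul_cancel₀ _ hapos.ne'] at this
      linarith
    · by_contra ha
      have hapos : 0 < |g₀ x (X x) (Y x)| := abs_pos.2 ha
      have hC0 : |g₀ x (X x) (Y x)| ≤ C := by
        have := (hC 0).2
        rw [(key 0).2] at this
        simpa using this
      set u : ℝ := (C + 1) / |g₀ x (X x) (Y x)| with hudef
      have hupos : 0 < u := div_pos (by linarith) hapos
      set t : ℝ := Real.log u with htdef
      have hexp : Real.exp t = u := Real.exp_log hupos
      have := (hC t).2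
      rw [(key t).2, abs_mul, abs_of_pos (Real.exp_pos _), hexp, hudef,
        div_mul_cancel₀ _ hapos.ne'] at this
      linarith
  refine ⟨part1, ?_, ?_⟩
  -- Part 2
  · intro t x u v
    obtain ⟨c, hcpos, hc⟩ := hconfX t x
    have hcXX : g (φX t x) (X (φX t x)) (X (φX t x)) = c * g x (X x) (X x) := by
      have h := hc (X x) (X x); rwa [hAX t x] at h
    rw [hg₀app, hg₀app, hcXX, hc u v]
    field_simp [(hXX x).ne', hcpos.ne']
  -- Part 3
  · intro s x u v
    obtain ⟨c, hcpos, hc⟩ := hconfY s x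
    have hYY0 : g (φY s x) (Y (φY s x)) (Y (φY s x)) = 0 := hconv _ _ _ (part1 (φY s x)).1
    have hXY0 : g (φY s x) (X (φY s x)) (Y (φY s x)) = 0 := hconv _ _ _ (part1 (φY s x)).2
    have hYX0 : g (φY s x) (Y (φY s x)) (X (φY s x)) = 0 := by
      rw [hsymm]; exact hXY0
    have hcXX : g (φY s x) (X (φY s x)) (X (φY s x)) = c * g x (X x) (X x) := by
      have h := hc (X x) (X x)
      rw [hBX s x] at h
      simp only [map_add, map_smul, LinearMap.add_apply, LinearMap.smul_apply,
        smul_eq_mul] at h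
      rw [hYY0, hXY0, hYX0] at h
      linarith [h]
    rw [hg₀app, hg₀app, hcXX, hc u v]
    field_simp [(hXX x).ne', hcpos.ne']
end

section
/- Let p_e be an element of a Lie group P acting affinely on a finite-dimensional real vector space W, such that the set {p_e^n : n ∈ ℤ} is relatively compact in the affine group, and let p_h be an affine transformation commuting with p_e and fixing a point v₀ ∈ W. Then p_h fixes pointwise the convex hull C of the closure of the orbit {p_e^n · v₀}, and p_e has a fixed point in C; consequently p_e and p_h have a common fixed point, and so does p = p_h p_e. -/
/-!
The fixed points of the affine map `ph` form a closed convex set containing the `pe`-orbit of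
`v₀`, hence containing `C`. By Carathéodory `C` is compact, and `pe` maps it into itself. The
Cesàro averages `aₙ` of a `pe`-orbit in `C` stay in `C` and, `pe` being affine, satisfy
`pe aₙ - aₙ = (peⁿ⁺¹ x - x) / (n + 1) → 0`; so any cluster point of them is fixed by `pe`.
-/

open Set Filter Topology Module Function

section AffineConvexHull

variable {𝕜 E F : Type*} [Ring 𝕜] [PartialOrder 𝕜] [AddCommGroup E] [Module 𝕜 E]
  [AddCommGroup F] [Module 𝕜 F]

theorem AffineMap.eqOn_convexHull {f g : E →ᵃ[𝕜] F} {s : Set E} (h : EqOn f g s) :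
    EqOn f g (convexHull 𝕜 s) := by
  have hconv : Convex 𝕜 {x | f x = g x} := by
    convert (convex_singleton (0 : F)).affine_preimage (f - g) using 1
    ext x
    simp [sub_eq_zero]
  exact convexHull_min h hconv

theorem AffineMap.mapsTo_convexHull (f : E →ᵃ[𝕜] F) {s : Set E} {t : Set F} (h : MapsTo f s t) :
    MapsTo f (convexHull 𝕜 s) (convexHull 𝕜 t) :=
  mapsTo_iff_image_subset.2 <| (f.image_convexHull s).subset.trans <|
    convexHull_mono h.image_subset

end AffineConvexHull

theorem convexHull_eq_iUnion_image_stdSimplex {𝕜 E : Type*} [Field 𝕜] [LinearOrder 𝕜]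
    [IsStrictOrderedRing 𝕜] [AddCommGroup E] [Module 𝕜 E] [FiniteDimensional 𝕜 E] (s : Set E) :
    convexHull 𝕜 s = ⋃ k : Fin (finrank 𝕜 E + 2),
      (fun p : (Fin k → 𝕜) × (Fin k → E) => ∑ i, p.1 i • p.2 i) ''
        (stdSimplex 𝕜 (Fin k) ×ˢ univ.pi fun _ => s) := by
  refine Subset.antisymm (fun x hx => ?_) (iUnion_subset fun k => ?_)
  · obtain ⟨ι, _, z, w, hzs, hai, hw0, hw1, rfl⟩ := eq_pos_convex_span_of_mem_convexHull hx
    have hcard : Fintype.card ι < finrank 𝕜 E + 2 :=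
      Nat.lt_succ_of_le <| hai.card_le_finrank_succ.trans <| by
        gcongr; exact Submodule.finrank_le _
    let e := (Fintype.equivFin ι).symm
    refine mem_iUnion.2 ⟨⟨_, hcard⟩, (w ∘ e, z ∘ e), ⟨⟨fun i => (hw0 _).le, ?_⟩,
      fun i _ => hzs ⟨_, rfl⟩⟩, e.sum_comp fun i => w i • z i⟩
    exact (e.sum_comp w).trans hw1
  · rintro _ ⟨⟨w, z⟩, ⟨⟨hw0, hw1⟩, hz⟩, rfl⟩
    exact (convex_convexHull 𝕜 s).sum_mem (fun i _ => hw0 i) hw1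
      fun i _ => subset_convexHull 𝕜 s (hz i trivial)

protected theorem IsCompact.convexHull {E : Type*} [AddCommGroup E] [Module ℝ E]
    [TopologicalSpace E] [ContinuousAdd E] [ContinuousSMul ℝ E] [FiniteDimensional ℝ E]
    {s : Set E} (hs : IsCompact s) : IsCompact (convexHull ℝ s) := by
  rw [convexHull_eq_iUnion_image_stdSimplex]
  exact isCompact_iUnion fun k =>
    ((isCompact_stdSimplex _ _).prod (isCompact_univ_pi fun _ => hs)).image (by fun_prop)

section BirkhoffAverage

variable {𝕜 E : Type*} [Field 𝕜] [AddCommGroup E] [Module 𝕜 E]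

theorem AffineMap.map_birkhoffAverage_id [CharZero 𝕜] (f : E →ᵃ[𝕜] E) {n : ℕ} (hn : n ≠ 0)
    (x : E) : f (birkhoffAverage 𝕜 f _root_.id n x) = birkhoffAverage 𝕜 f _root_.id n (f x) := by
  have hw : ∑ _k ∈ Finset.range n, (n : 𝕜)⁻¹ = 1 := by simp [hn]
  have hcomb : ∀ y, birkhoffAverage 𝕜 f _root_.id n y =
      (Finset.range n).affineCombination 𝕜 (f^[·] y) fun _ => (n : 𝕜)⁻¹ := fun y => by
    rw [Finset.affineCombination_eq_linear_combination _ _ _ hw, birkhoffAverage, birkhoffSum,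
      Finset.smul_sum]
    rfl
  rw [hcomb, hcomb, Finset.map_affineCombination _ _ _ hw]
  congr 2 with k
  exact (Commute.iterate_self f k).symm x

theorem Convex.birkhoffAverage_mem [LinearOrder 𝕜] [IsStrictOrderedRing 𝕜] {α : Type*}
    {K : Set E} (hK : Convex 𝕜 K) {f : α → α} {g : α → E} {x : α} (hx : ∀ k, g (f^[k] x) ∈ K)
    {n : ℕ} (hn : n ≠ 0) : birkhoffAverage 𝕜 f g n x ∈ K := by
  rw [birkhoffAverage, birkhoffSum, Finset.smul_sum]
  exact hK.sum_mem (fun _ _ => by positivity) (by simp [hn]) fun k _ => hx k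

end BirkhoffAverage

theorem AffineMap.exists_isFixedPt_of_mapsTo {E : Type*} [NormedAddCommGroup E]
    [NormedSpace ℝ E] {f : E →ᵃ[ℝ] E} (hf : Continuous f) {K : Set E} (hK : IsCompact K)
    (hKc : Convex ℝ K) (hne : K.Nonempty) (hfK : MapsTo f K K) : ∃ x ∈ K, IsFixedPt f x := by
  obtain ⟨x₀, hx₀⟩ := hne
  set a : ℕ → E := fun n => birkhoffAverage ℝ f _root_.id (n + 1) x₀
  have horbit : ∀ k, f^[k] x₀ ∈ K := fun k => hfK.iterate k hx₀
  have haK : ∀ n, a n ∈ K := fun n => hKc.birkhoffAverage_mem horbit n.succ_ne_zero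
  have hdrift : Tendsto (fun n => f (a n) - a n) atTop (𝓝 0) := by
    refine ((tendsto_birkhoffAverage_apply_sub_birkhoffAverage ℝ (g := _root_.id)
      (hK.isBounded.subset (range_subset_iff.2 horbit))).comp (tendsto_add_atTop_nat 1)).congr
      fun n => (congrArg (· - a n) (f.map_birkhoffAverage_id n.succ_ne_zero x₀)).symm
  obtain ⟨y, hyK, φ, hφ, hlim⟩ := hK.tendsto_subseq haK
  have hfy : Tendsto (fun k => f (a (φ k))) atTop (𝓝 y) := by
    simpa using hlim.add (hdrift.comp hφ.tendsto_atTop)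
  exact ⟨y, hyK, tendsto_nhds_unique ((hf.tendsto y).comp hlim) hfy⟩

/-- Let `pe` be an affine transformation of a finite-dimensional real vector
space whose orbits under iteration (forwards and backwards) are relatively compact, and
let `ph` be an affine transformation commuting with `pe` and fixing a point `v₀`.  Then
`ph` fixes pointwise the convex hull `C` of the closure of the orbit of `v₀` under `pe`,
`pe` has a fixed point in `C`, and consequently `pe`, `ph` and `p = ph ∘ pe` have a
common fixed point. -/
theorem affine_common_fixed_point
    (E : Type*) [NormedAddCommGroup E] [NormedSpace ℝ E] [FiniteDimensional ℝ E]
    (pe ph : E ≃ᵃ[ℝ] E)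
    (hrel : ∀ w : E, IsCompact (closure (Set.range fun n : ℤ => (pe ^ n) w)))
    (hcomm : ph * pe = pe * ph)
    (v₀ : E) (hfix : ph v₀ = v₀) :
    (∀ w ∈ convexHull ℝ (closure (Set.range fun n : ℤ => (pe ^ n) v₀)), ph w = w) ∧
    (∃ w ∈ convexHull ℝ (closure (Set.range fun n : ℤ => (pe ^ n) v₀)),
      pe w = w ∧ ph w = w ∧ ph (pe w) = w) := by
  set orbit := Set.range fun n : ℤ => (pe ^ n) v₀
  have hpe : Continuous pe := pe.toAffineMap.continuous_of_finiteDimensional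
  have hph : Continuous ph := ph.toAffineMap.continuous_of_finiteDimensional
  have hph_orbit : EqOn ph _root_.id orbit := by
    rintro _ ⟨n, rfl⟩
    change (ph * pe ^ n) v₀ = (pe ^ n) v₀
    rw [(Commute.zpow_right hcomm n).eq]
    exact congrArg (pe ^ n) hfix
  have hpe_orbit : MapsTo pe orbit orbit := by
    rintro _ ⟨n, rfl⟩
    refine ⟨1 + n, ?_⟩
    change (pe ^ (1 + n)) v₀ = pe ((pe ^ n) v₀)
    rw [zpow_one_add]
    rfl
  have hph_hull : EqOn ph _root_.id (convexHull ℝ (closure orbit)) :=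
    AffineMap.eqOn_convexHull (f := ph.toAffineMap) (g := AffineMap.id ℝ E)
      (hph_orbit.closure hph continuous_id)
  obtain ⟨w, hw, hpew : pe w = w⟩ :=
    pe.toAffineMap.exists_isFixedPt_of_mapsTo hpe (hrel v₀).convexHull (convex_convexHull ℝ _)
      ⟨v₀, subset_convexHull ℝ _ (subset_closure ⟨0, by simp⟩)⟩
      (pe.toAffineMap.mapsTo_convexHull (hpe_orbit.closure hpe))
  exact ⟨hph_hull, w, hw, hpew, hph_hull hw, by rw [hpew]; exact hph_hull hw⟩
end
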